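/- With R_b, W_b, q_b, a_b the explicit double-cusp functions, the constraint equations hold: a_t (R_t/R) + a_x (R_x/R) + (1/4)(R_x²/R² + R_t²/R²) − R_xx/R − (W_x² + W_t²) − (1/4)e^{−4W}(q_x² + q_t²) = 0, and a_x (R_t/R) + a_t (R_x/R) − R_tx/R + R_x R_t/(2R²) + 2 W_t W_x − (1/2)e^{−4W} q_x q_t = 0. -/

import Mathlib

/-!
Every derivative of the double-cusp functions is elementary: `R_t = 2R`, `R_x = 2R tanh 2x`,
`R_xx = 4R`, `R_tx = 2R_x`, `W_x = W₀ / cosh 2x`, `a_t = 3/2 + W₀²/2`,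
`a_x = -(1/2 + W₀²/2) tanh 2x`, and `W_t = q_t = q_x = 0`. Substituted into the constraints,
the second one cancels identically, and the first reduces to
`W₀² (1 - tanh² 2x - 1 / cosh² 2x) = 0`, i.e. to `cosh² - sinh² = 1`.
-/

open Real MeasureTheory Filter

noncomputable def pt (u : ℝ → ℝ → ℝ) : ℝ → ℝ → ℝ := fun t x => deriv (fun s => u s x) t
noncomputable def px (u : ℝ → ℝ → ℝ) : ℝ → ℝ → ℝ := fun t x => deriv (fun y => u t y) x

theorem Real.hasDerivAt_log_cosh (x : ℝ) :
    HasDerivAt (fun y => log (cosh y)) (tanh x) x := by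
  simpa [tanh_eq_sinh_div_cosh] using (hasDerivAt_cosh x).log (cosh_pos x).ne'

theorem Real.hasDerivAt_arctan_exp (x : ℝ) :
    HasDerivAt (fun y => arctan (exp y)) (1 / (2 * cosh x)) x := by
  convert (hasDerivAt_exp x).arctan using 1
  rw [cosh_eq, exp_neg]
  field_simp
  ring

lemma pt_const_time (f : ℝ → ℝ) (t x : ℝ) : pt (fun _ y => f y) t x = 0 :=
  deriv_const t (f x)

lemma px_const_space (g : ℝ → ℝ) (t x : ℝ) : px (fun s _ => g s) t x = 0 :=
  deriv_const x (g t)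

namespace DoubleCusp

noncomputable def R (R₀ : ℝ) (t x : ℝ) : ℝ := R₀ * exp (2 * t) * cosh (2 * x)

noncomputable def W (W₀ W₁ : ℝ) (_t x : ℝ) : ℝ := W₁ + W₀ * arctan (exp (2 * x))

noncomputable def a (W₀ a₀ : ℝ) (t x : ℝ) : ℝ :=
  a₀ - (1 / 2 + W₀ ^ 2 / 2) * (1 / 2) * log (cosh (2 * x)) + (3 / 2 + W₀ ^ 2 / 2) * t

variable (R₀ W₀ W₁ a₀ t x : ℝ)

lemma pt_R : pt (R R₀) t x = 2 * R R₀ t x := by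
  refine (((hasDerivAt_const_mul 2).exp.const_mul R₀).mul_const _).deriv.trans ?_
  simp only [R]; ring

lemma px_R : px (R R₀) t x = 2 * R₀ * exp (2 * t) * sinh (2 * x) := by
  refine ((hasDerivAt_const_mul 2).cosh.const_mul _).deriv.trans ?_
  ring

lemma px_px_R : px (px (R R₀)) t x = 4 * R R₀ t x := by
  have h : HasDerivAt (fun y => px (R R₀) t y) (2 * R₀ * exp (2 * t) * (cosh (2 * x) * 2)) x := by
    simpa only [px_R] using (hasDerivAt_const_mul 2).sinh.const_mul (2 * R₀ * exp (2 * t))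
  rw [px, h.deriv, R]; ring

lemma pt_px_R : pt (px (R R₀)) t x = 2 * px (R R₀) t x := by
  have h : HasDerivAt (fun s => px (R R₀) s x) (2 * R₀ * (exp (2 * t) * 2) * sinh (2 * x)) t := by
    simpa only [px_R] using
      ((hasDerivAt_const_mul 2).exp.const_mul (2 * R₀)).mul_const (sinh (2 * x))
  rw [pt, h.deriv, px_R]; ring

lemma pt_W : pt (W W₀ W₁) t x = 0 := pt_const_time _ t x

lemma px_W : px (W W₀ W₁) t x = W₀ / cosh (2 * x) := by
  refine ((((hasDerivAt_arctan_exp (2 * x)).comp x (hasDerivAt_const_mul 2)).const_mul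
    W₀).const_add W₁).deriv.trans ?_
  field_simp

lemma pt_a : pt (a W₀ a₀) t x = 3 / 2 + W₀ ^ 2 / 2 :=
  (((hasDerivAt_id t).const_mul _).const_add _).deriv.trans (mul_one _)

lemma px_a : px (a W₀ a₀) t x = -(1 / 2 + W₀ ^ 2 / 2) * tanh (2 * x) := by
  refine (((((hasDerivAt_log_cosh (2 * x)).comp x (hasDerivAt_const_mul 2)).const_mul
    _).const_sub a₀).add_const _).deriv.trans ?_
  ring

end DoubleCusp

open DoubleCusp in
/-- the explicit double-cusp functions satisfy the two constraint
equations. -/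
theorem statement5 (R₀ W₀ W₁ q₀ a₀ : ℝ) (hR₀ : 0 < R₀)
    (Rb Wb qb ab : ℝ → ℝ → ℝ)
    (hRb : Rb = fun t x => R₀ * Real.exp (2 * t) * Real.cosh (2 * x))
    (hWb : Wb = fun _ x => W₁ + W₀ * Real.arctan (Real.exp (2 * x)))
    (hqb : qb = fun _ _ => q₀)
    (hab : ab = fun t x => a₀ - (1 / 2 + W₀ ^ 2 / 2) * (1 / 2) * Real.log (Real.cosh (2 * x))
        + (3 / 2 + W₀ ^ 2 / 2) * t) :
    (∀ t x, pt ab t x * (pt Rb t x / Rb t x) + px ab t x * (px Rb t x / Rb t x)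
        + (1 / 4) * ((px Rb t x) ^ 2 / (Rb t x) ^ 2 + (pt Rb t x) ^ 2 / (Rb t x) ^ 2)
        - px (px Rb) t x / Rb t x
        - ((px Wb t x) ^ 2 + (pt Wb t x) ^ 2)
        - (1 / 4) * Real.exp (-(4 * Wb t x)) * ((px qb t x) ^ 2 + (pt qb t x) ^ 2) = 0) ∧
    (∀ t x, px ab t x * (pt Rb t x / Rb t x) + pt ab t x * (px Rb t x / Rb t x)
        - pt (px Rb) t x / Rb t x
        + px Rb t x * pt Rb t x / (2 * (Rb t x) ^ 2)
        + 2 * pt Wb t x * px Wb t x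
        - (1 / 2) * Real.exp (-(4 * Wb t x)) * px qb t x * pt qb t x = 0) := by
  obtain rfl : Rb = R R₀ := hRb
  obtain rfl : Wb = W W₀ W₁ := hWb
  obtain rfl : ab = a W₀ a₀ := hab
  subst hqb
  have hR₀' := hR₀.ne'
  constructor <;> intro t x
  · rw [px_px_R, pt_R, px_R, pt_W, px_W, pt_a, px_a, pt_const_time (fun _ => q₀),
      px_const_space (fun _ => q₀), tanh_eq_sinh_div_cosh, R]
    field_simp
    linear_combination (4 * W₀ ^ 2) * cosh_sq_sub_sinh_sq (2 * x)
  · rw [pt_px_R, pt_R, px_R, pt_W, px_W, pt_a, px_a, pt_const_time (fun _ => q₀),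
      px_const_space (fun _ => q₀), tanh_eq_sinh_div_cosh, R]
    field_simp
    ring
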